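/- Let f,g,h be crossed module morphisms (E,R,∂) → (E',R',∂') of commutative algebras, s an f₀-derivation connecting f to g, and s' a g₀-derivation connecting g to h. Then the pointwise sum s+s' is an f₀-derivation connecting f to h: (s+s')(rr') = f₀(r)▶(s+s')(r') + f₀(r')▶(s+s')(r) + (s+s')(r)(s+s')(r'). -/

import Mathlib

/-- An action of a commutative `k`-algebra `R` on a commutative `k`-algebra `M`:
a `k`-bilinear map satisfying `r▶(mm') = (r▶m)m' = m(r▶m')` and `(rr')▶m = r▶(r'▶m)`. -/
structure AlgAction (k R M : Type*) [CommRing k] [CommRing R] [CommRing M]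
    [Algebra k R] [Algebra k M] where
  act : R →ₗ[k] M →ₗ[k] M
  a1 : ∀ (r : R) (m m' : M), act r (m * m') = act r m * m'
  a1' : ∀ (r : R) (m m' : M), act r (m * m') = m * act r m'
  a2 : ∀ (r r' : R) (m : M), act (r * r') m = act r (act r' m)

/-- A pre-crossed module of commutative `k`-algebras. -/
structure PreCrossedModule (k E R : Type*) [CommRing k] [CommRing E] [CommRing R]
    [Algebra k E] [Algebra k R] extends AlgAction k R E where
  map : E →ₗ[k] R
  map_mul : ∀ e e' : E, map (e * e') = map e * map e'
  xm1 : ∀ (r : R) (e : E), map (act r e) = r * map e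

/-- A crossed module of commutative `k`-algebras. -/
structure CrossedModule (k E R : Type*) [CommRing k] [CommRing E] [CommRing R]
    [Algebra k E] [Algebra k R] extends PreCrossedModule k E R where
  xm2 : ∀ e e' : E, act (map e) e' = e * e'

/-- A morphism of crossed modules of commutative `k`-algebras. -/
structure XHom {k E R E' R' : Type*} [CommRing k] [CommRing E] [CommRing R]
    [CommRing E'] [CommRing R'] [Algebra k E] [Algebra k R] [Algebra k E'] [Algebra k R']
    (C : CrossedModule k E R) (C' : CrossedModule k E' R') where
  f0 : R →ₗ[k] R'
  f1 : E →ₗ[k] E'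
  f0_mul : ∀ r r', f0 (r * r') = f0 r * f0 r'
  f1_mul : ∀ e e', f1 (e * e') = f1 e * f1 e'
  comm : ∀ e, f0 (C.map e) = C'.map (f1 e)
  hact : ∀ r e, f1 (C.act r e) = C'.act (f0 r) (f1 e)

/-- `s : R → E'` is an `f₀`-derivation. -/
def IsDeriv {k E R E' R' : Type*} [CommRing k] [CommRing E] [CommRing R]
    [CommRing E'] [CommRing R'] [Algebra k E] [Algebra k R] [Algebra k E'] [Algebra k R']
    {C : CrossedModule k E R} {C' : CrossedModule k E' R'}
    (f : XHom C C') (s : R →ₗ[k] E') : Prop :=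
  ∀ r r', s (r * r') = C'.act (f.f0 r) (s r') + C'.act (f.f0 r') (s r) + s r * s r'

/-- `s` connects `f` to `g`: `g₀ = f₀ + ∂'∘s` and `g₁ = f₁ + s∘∂`. -/
def Connects {k E R E' R' : Type*} [CommRing k] [CommRing E] [CommRing R]
    [CommRing E'] [CommRing R'] [Algebra k E] [Algebra k R] [Algebra k E'] [Algebra k R']
    {C : CrossedModule k E R} {C' : CrossedModule k E' R'}
    (f g : XHom C C') (s : R →ₗ[k] E') : Prop :=
  (∀ r, g.f0 r = f.f0 r + C'.map (s r)) ∧ (∀ e, g.f1 e = f.f1 e + s (C.map e))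

/-! The only non-formal input is the second Peiffer–Whitehead relation `∂'(e) ▶ e' = e e'`:
it turns the twisted term `g₀(r) ▶ s'(r') = (f₀(r) + ∂'(s r)) ▶ s'(r')` of the `g₀`-derivation
`s'` into `f₀(r) ▶ s'(r') + s(r) s'(r')`, and these cross terms are exactly what the product
`(s + s')(r) (s + s')(r')` contributes beyond `s(r) s(r') + s'(r) s'(r')`. -/

section

variable {k E R E' R' : Type*} [CommRing k] [CommRing E] [CommRing R] [CommRing E'] [CommRing R']
  [Algebra k E] [Algebra k R] [Algebra k E'] [Algebra k R']

theorem CrossedModule.act_add_map (C : CrossedModule k E R) (r : R) (e m : E) :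
    C.act (r + C.map e) m = C.act r m + e * m := by
  rw [map_add, LinearMap.add_apply, C.xm2]

variable {C : CrossedModule k E R} {C' : CrossedModule k E' R'}

theorem IsDeriv.add {f g : XHom C C'} {s s' : R →ₗ[k] E'} (hs : IsDeriv f s)
    (hfg : ∀ r, g.f0 r = f.f0 r + C'.map (s r)) (hs' : IsDeriv g s') :
    IsDeriv f (s + s') := by
  intro r r'
  simp only [LinearMap.add_apply, hs r r', hs' r r', hfg, C'.act_add_map]
  simp only [map_add]
  ring

theorem Connects.trans {f g h : XHom C C'} {s s' : R →ₗ[k] E'} (hc : Connects f g s)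
    (hc' : Connects g h s') : Connects f h (s + s') := by
  constructor
  · intro r
    rw [hc'.1, hc.1, LinearMap.add_apply, map_add, add_assoc]
  · intro e
    rw [hc'.2, hc.2, LinearMap.add_apply, add_assoc]

end

theorem stmt14 (k E R E2 R2 : Type*) [CommRing k] [CommRing E] [CommRing R] [CommRing E2] [CommRing R2]
    [Algebra k E] [Algebra k R] [Algebra k E2] [Algebra k R2]
    (C : CrossedModule k E R) (C2 : CrossedModule k E2 R2)
    (f g h : XHom C C2) (s s' : R →ₗ[k] E2)
    (hs : IsDeriv f s) (hc : Connects f g s)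
    (hs' : IsDeriv g s') (hc' : Connects g h s') :
    IsDeriv f (s + s') ∧ Connects f h (s + s') :=
  ⟨hs.add hc.1 hs', hc.trans hc'⟩
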